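/- arXiv:math/9805001 — 2 statements merged into one kernel-verified Lean document; each statement's English description precedes it below -/
import Mathlib

section
/- Asymptotic central charge of the Virasoro algebra at extremal weight h → 1/2: for every integer n ≥ 2, λ_n(1/2) = 4n + 2, the function h ↦ λ_n(h) is differentiable at h = 1/2, and the derivatives c_n := λ_n'(1/2) satisfy lim_{n→∞} c_n = 4 = (2/3)·(2³ − 2); moreover the sequence (c_n − 4)_{n≥2} is square-summable. Thus, modulo Hilbert–Schmidt (square-summable diagonal) corrections, for h = 1/2 + ℏ the first-order term in ℏ of [L₂, L₋₂] beyond its value at ℏ = 0 is 4ℏ·id, which corresponds to the Virasoro relation [L₂, L₋₂] = 4L₀ + ((2³−2)/12)·c with asymptotic central charge c = 8ℏ. -/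
/-!
`T(n, h) = (n+1)(n+2)(n+3h)²/((n+2h)(n+2h+1))` (`lamTerm`) is the eigenvalue of `L₂ L₋₂` on `zⁿ`;
since `L₂ zⁿ ∝ zⁿ⁻²`, the operator `L₋₂ L₂` acts on `zⁿ` by `T(n - 2, h)`, so
`λₙ(h) = T(n, h) - T(n - 2, h)`. At `h = 1/2` the denominator of `T(c, ·)` cancels the
prefactor `(c + 1)(c + 2)`, giving `T(c, 1/2) = (c + 3/2)²` and
`∂ₕT(c, 1/2) = 2c + 3 - (1/(c+1) + 1/(c+2))/2`. Subtracting the shift by `2` yields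
`λₙ(1/2) = 4n + 2` and `λₙ'(1/2) = 4 + εₙ`, where the telescoping defect `εₙ` (`chargeDefect n`)
lies between `0` and `1/(n-1)`; this gives both the limit `4` and the square-summability of `(εₙ)`.
-/

open Filter Topology

noncomputable section

/-- The eigenvalue `λₙ(h)` of the commutator `[L₂, L₋₂]` on the monomial `zⁿ` in the Verma
module `V_h`:
`λₙ(h) = (n+3h)²(n+1)(n+2)/((n+2h)(n+2h+1)) − (n+3h−2)²·n·(n−1)/((n+2h−1)(n+2h−2))`. -/
def lam (h : ℝ) (n : ℕ) : ℝ :=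
  ((n : ℝ) + 3 * h) ^ 2 * ((n : ℝ) + 1) * ((n : ℝ) + 2) /
      (((n : ℝ) + 2 * h) * ((n : ℝ) + 2 * h + 1)) -
    ((n : ℝ) + 3 * h - 2) ^ 2 * (n : ℝ) * ((n : ℝ) - 1) /
      (((n : ℝ) + 2 * h - 1) * ((n : ℝ) + 2 * h - 2))

def lamTerm (c h : ℝ) : ℝ :=
  (c + 1) * (c + 2) * (c + 3 * h) ^ 2 / ((c + 2 * h) * (c + 2 * h + 1))

def chargeDefect (c : ℝ) : ℝ := (1 / (c - 1) + 1 / c - (1 / (c + 1) + 1 / (c + 2))) / 2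

theorem lam_eq_lamTerm_sub_lamTerm (h : ℝ) (n : ℕ) :
    lam h n = lamTerm n h - lamTerm ((n : ℝ) - 2) h := by
  unfold lam lamTerm
  ring

section

variable {c : ℝ}

theorem lamTerm_half (h₁ : c + 1 ≠ 0) (h₂ : c + 2 ≠ 0) : lamTerm c (1 / 2) = (c + 3 / 2) ^ 2 := by
  unfold lamTerm
  rw [show (c + 2 * (1 / 2)) * (c + 2 * (1 / 2) + 1) = (c + 1) * (c + 2) by ring,
    mul_div_cancel_left₀ _ (mul_ne_zero h₁ h₂)]
  ring

theorem hasDerivAt_lamTerm_half (h₁ : c + 1 ≠ 0) (h₂ : c + 2 ≠ 0) :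
    HasDerivAt (lamTerm c) (2 * c + 3 - (1 / (c + 1) + 1 / (c + 2)) / 2) (1 / 2) := by
  have affine (a b : ℝ) : HasDerivAt (fun h : ℝ => b + a * h) a (1 / 2) := by
    simpa using ((hasDerivAt_id (1 / 2 : ℝ)).const_mul a).const_add b
  have num := ((affine 3 c).fun_pow 2).const_mul ((c + 1) * (c + 2))
  have den := (affine 2 c).fun_mul ((affine 2 c).add_const 1)
  have hden : (c + 2 * (1 / 2)) * (c + 2 * (1 / 2) + 1) ≠ 0 := by
    convert mul_ne_zero h₁ h₂ using 1; ring
  refine (num.fun_div den hden).congr_deriv ?_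
  simp only [show (2 : ℝ) * (1 / 2) = 1 by norm_num, add_assoc, one_add_one_eq_two]
  field_simp
  ring

theorem chargeDefect_nonneg (hc : 1 < c) : 0 ≤ chargeDefect c := by
  have h₁ : 1 / (c + 1) ≤ 1 / (c - 1) := one_div_le_one_div_of_le (by linarith) (by linarith)
  have h₂ : 1 / (c + 2) ≤ 1 / c := one_div_le_one_div_of_le (by linarith) (by linarith)
  unfold chargeDefect
  linarith

theorem chargeDefect_le (hc : 1 < c) : chargeDefect c ≤ 1 / (c - 1) := by
  have h₁ : 1 / c ≤ 1 / (c - 1) := one_div_le_one_div_of_le (by linarith) (by linarith)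
  have h₂ : 0 < 1 / (c + 1) := one_div_pos.mpr (by linarith)
  have h₃ : 0 < 1 / (c + 2) := one_div_pos.mpr (by linarith)
  unfold chargeDefect
  linarith

end

section

variable {n : ℕ}

theorem lam_half (hn : 2 ≤ n) : lam (1 / 2) n = 4 * (n : ℝ) + 2 := by
  have hc : (2 : ℝ) ≤ n := by exact_mod_cast hn
  rw [lam_eq_lamTerm_sub_lamTerm, lamTerm_half (by linarith) (by linarith),
    lamTerm_half (by linarith) (by linarith)]
  ring

theorem hasDerivAt_lam_half (hn : 2 ≤ n) :
    HasDerivAt (fun h : ℝ => lam h n) (4 + chargeDefect n) (1 / 2) := by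
  have hc : (2 : ℝ) ≤ n := by exact_mod_cast hn
  simp only [lam_eq_lamTerm_sub_lamTerm]
  refine ((hasDerivAt_lamTerm_half (by linarith) (by linarith)).sub
    (hasDerivAt_lamTerm_half (by linarith) (by linarith))).congr_deriv ?_
  unfold chargeDefect
  ring

end

theorem chargeDefect_natCast_add_two_mem_Icc (n : ℕ) :
    chargeDefect (n + 2 : ℕ) ∈ Set.Icc 0 (1 / ((n : ℝ) + 1)) := by
  have hc : 1 < ((n + 2 : ℕ) : ℝ) := by push_cast; linarith [n.cast_nonneg (α := ℝ)]
  refine ⟨chargeDefect_nonneg hc, (chargeDefect_le hc).trans_eq ?_⟩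
  push_cast
  ring

theorem tendsto_chargeDefect : Tendsto (fun n : ℕ => chargeDefect n) atTop (𝓝 0) := by
  rw [← tendsto_add_atTop_iff_nat 2]
  exact squeeze_zero (fun n => (chargeDefect_natCast_add_two_mem_Icc n).1)
    (fun n => (chargeDefect_natCast_add_two_mem_Icc n).2) tendsto_one_div_add_atTop_nhds_zero_nat

theorem summable_chargeDefect_natCast_add_two_sq :
    Summable (fun n : ℕ => chargeDefect (n + 2 : ℕ) ^ 2) := by
  have hp : Summable (fun n : ℕ => (1 / ((n : ℝ) + 1)) ^ 2) := by
    simpa using (summable_nat_add_iff 1).mpr (Real.summable_one_div_nat_pow.mpr one_lt_two)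
  refine hp.of_nonneg_of_le (fun n => sq_nonneg _) fun n => ?_
  obtain ⟨h₀, h₁⟩ := chargeDefect_natCast_add_two_mem_Icc n
  exact pow_le_pow_left₀ h₀ h₁ 2

/-- asymptotic central charge at `h → 1/2`: for every `n ≥ 2`,
`λₙ(1/2) = 4n+2` and `h ↦ λₙ(h)` is differentiable at `1/2`; the derivatives
`cₙ = λₙ'(1/2)` tend to `4 = (2/3)(2³−2)` and `(cₙ − 4)_{n≥2}` is square-summable
(a Hilbert–Schmidt diagonal correction), giving asymptotic central charge `c = 8ℏ`. -/
theorem stmt_18 :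
    (∀ n : ℕ, 2 ≤ n →
      lam (1 / 2) n = 4 * (n : ℝ) + 2 ∧
      DifferentiableAt ℝ (fun h : ℝ => lam h n) (1 / 2)) ∧
    Filter.Tendsto (fun n : ℕ => deriv (fun h : ℝ => lam h n) (1 / 2))
      Filter.atTop (nhds 4) ∧
    (4 : ℝ) = 2 / 3 * (2 ^ 3 - 2) ∧
    Summable (fun n : ℕ => (deriv (fun h : ℝ => lam h (n + 2)) (1 / 2) - 4) ^ 2) := by
  have deriv_eq {n : ℕ} (hn : 2 ≤ n) : deriv (fun h : ℝ => lam h n) (1 / 2) = 4 + chargeDefect n :=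
    (hasDerivAt_lam_half hn).deriv
  refine ⟨fun n hn => ⟨lam_half hn, (hasDerivAt_lam_half hn).differentiableAt⟩, ?_, by norm_num, ?_⟩
  · have h := tendsto_chargeDefect.const_add 4
    rw [add_zero] at h
    refine h.congr' ?_
    filter_upwards [eventually_ge_atTop 2] with n hn
    exact (deriv_eq hn).symm
  · simpa only [deriv_eq (Nat.le_add_left 2 _), add_sub_cancel_left]
      using summable_chargeDefect_natCast_add_two_sq

end
end

section
/- Asymptotic central charge of the Virasoro algebra at extremal weight h → 1: for every integer n ≥ 2, λ_n(1) = 4n + 4, the function h ↦ λ_n(h) is differentiable at h = 1, and the derivatives b_n := λ_n'(1) satisfy lim_{n→∞} b_n = 4 = (2/3)·(2³ − 2); moreover the sequence (b_n − 4)_{n≥2} is square-summable. Thus, modulo Hilbert–Schmidt (square-summable diagonal) corrections, for h = 1 + ℏ the first-order term in ℏ of [L₂, L₋₂] beyond its value at ℏ = 0 is 4ℏ·id, which gives the same asymptotic central charge c = 8ℏ as at h → 1/2. -/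
/-!
`λₙ(h) = μ(h, n) − μ(h, n − 2)`, where `μ = lowerRaiseEigenvalue` is the eigenvalue of
`L₂L₋₂` on `zˣ` (and `L₋₂L₂` acts on `zⁿ` by `μ(h, n − 2)`).
At `h = 1` the factors `x + 2h + 1` and `x + 3h` cancel, so `μ(1, x) = (x+1)(x+3)`,
and logarithmic differentiation gives `∂ₕμ(1, x) = 2x + 2/(x+2)`. Hence
`λₙ(1) = 4n + 4` and `λₙ'(1) = 4 − 4/(n(n+2))`, which tends to `4` with an `O(n⁻²)` error.
-/

noncomputable section

open Filter Topology

def lowerRaiseEigenvalue (h x : ℝ) : ℝ :=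
  (x + 3 * h) ^ 2 * (x + 1) * (x + 2) / ((x + 2 * h) * (x + 2 * h + 1))

lemma lam_eq_lowerRaiseEigenvalue_sub (h : ℝ) (n : ℕ) :
    lam h n = lowerRaiseEigenvalue h n - lowerRaiseEigenvalue h (n - 2) := by
  unfold lam lowerRaiseEigenvalue
  ring_nf

section

variable {x : ℝ}

private lemma denom_one_ne_zero (h2 : x + 2 ≠ 0) (h3 : x + 3 ≠ 0) :
    (x + 2 * 1) * (x + 2 * 1 + 1) ≠ 0 := by
  convert mul_ne_zero h2 h3 using 2 <;> ring

lemma lowerRaiseEigenvalue_one (h2 : x + 2 ≠ 0) (h3 : x + 3 ≠ 0) :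
    lowerRaiseEigenvalue 1 x = (x + 1) * (x + 3) := by
  rw [lowerRaiseEigenvalue, div_eq_iff (denom_one_ne_zero h2 h3)]
  ring

lemma hasDerivAt_lowerRaiseEigenvalue_one (h2 : x + 2 ≠ 0) (h3 : x + 3 ≠ 0) :
    HasDerivAt (fun h => lowerRaiseEigenvalue h x) (2 * x + 2 / (x + 2)) 1 := by
  have hlin (a : ℝ) : HasDerivAt (fun h : ℝ => x + a * h) a 1 := by
    simpa using ((hasDerivAt_id (1 : ℝ)).const_mul a).const_add x
  have hnum := (((hlin 3).fun_pow 2).mul_const (x + 1)).mul_const (x + 2)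
  have hden := (hlin 2).fun_mul ((hlin 2).add_const 1)
  refine (hnum.div hden (denom_one_ne_zero h2 h3)).congr_deriv ?_
  rw [show x + 2 * 1 + 1 = x + 3 by ring]
  field_simp
  ring

end

variable {n : ℕ}

lemma lam_one (hn : 0 < n) : lam 1 n = 4 * n + 4 := by
  have hn : (0 : ℝ) < n := by exact_mod_cast hn
  rw [lam_eq_lowerRaiseEigenvalue_sub, lowerRaiseEigenvalue_one (by positivity) (by positivity),
    lowerRaiseEigenvalue_one (by ring_nf; positivity) (by ring_nf; positivity)]
  ring

lemma hasDerivAt_lam_one (hn : 0 < n) :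
    HasDerivAt (fun h => lam h n) (4 - 4 / (n * (n + 2))) 1 := by
  have hn : (0 : ℝ) < n := by exact_mod_cast hn
  simp only [lam_eq_lowerRaiseEigenvalue_sub]
  have hupper := hasDerivAt_lowerRaiseEigenvalue_one (x := n) (by positivity) (by positivity)
  have hlower := hasDerivAt_lowerRaiseEigenvalue_one (x := n - 2)
    (by ring_nf; positivity) (by ring_nf; positivity)
  refine (hupper.sub hlower).congr_deriv ?_
  rw [sub_add_cancel]
  field_simp
  ring

lemma tendsto_deriv_lam_one :
    Tendsto (fun n : ℕ => deriv (fun h => lam h n) 1) atTop (𝓝 4) := by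
  have hden : Tendsto (fun n : ℕ => (n : ℝ) * (n + 2)) atTop atTop :=
    tendsto_natCast_atTop_atTop.atTop_mul_atTop₀
      (tendsto_atTop_add_const_right _ 2 tendsto_natCast_atTop_atTop)
  have hlim : Tendsto (fun n : ℕ => (4 : ℝ) - 4 / (n * (n + 2))) atTop (𝓝 4) := by
    simpa using tendsto_const_nhds.sub (tendsto_const_nhds.div_atTop hden)
  refine hlim.congr' ?_
  filter_upwards [eventually_gt_atTop 0] with n hn
  exact (hasDerivAt_lam_one hn).deriv.symm

lemma summable_sq_deriv_lam_one_sub_four :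
    Summable (fun n : ℕ => (deriv (fun h => lam h (n + 2)) 1 - 4) ^ 2) := by
  refine .of_nonneg_of_le (fun n => sq_nonneg _) (fun n => ?_)
    (summable_pow_div_add (16 : ℝ) 2 2 one_lt_two)
  rw [(hasDerivAt_lam_one (by omega : 0 < n + 2)).deriv, Real.norm_of_nonneg (by positivity)]
  push_cast
  rw [sub_sub_cancel_left, neg_sq, div_pow, show (16 : ℝ) = 4 ^ 2 by norm_num]
  gcongr
  have : (1 : ℝ) ≤ n + 2 + 2 := by linarith [n.cast_nonneg (α := ℝ)]
  exact le_mul_of_one_le_right (by positivity) this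

/-- asymptotic central charge at `h → 1`: for every `n ≥ 2`,
`λₙ(1) = 4n+4` and `h ↦ λₙ(h)` is differentiable at `1`; the derivatives
`bₙ = λₙ'(1)` tend to `4 = (2/3)(2³−2)` and `(bₙ − 4)_{n≥2}` is square-summable
(a Hilbert–Schmidt diagonal correction), giving the same asymptotic central charge
`c = 8ℏ` as at `h → 1/2`. -/
theorem stmt_19 :
    (∀ n : ℕ, 2 ≤ n →
      lam 1 n = 4 * (n : ℝ) + 4 ∧
      DifferentiableAt ℝ (fun h : ℝ => lam h n) 1) ∧
    Filter.Tendsto (fun n : ℕ => deriv (fun h : ℝ => lam h n) 1)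
      Filter.atTop (nhds 4) ∧
    (4 : ℝ) = 2 / 3 * (2 ^ 3 - 2) ∧
    Summable (fun n : ℕ => (deriv (fun h : ℝ => lam h (n + 2)) 1 - 4) ^ 2) := by
  refine ⟨fun n hn => ⟨lam_one (by omega), (hasDerivAt_lam_one (by omega)).differentiableAt⟩,
    tendsto_deriv_lam_one, by norm_num, summable_sq_deriv_lam_one_sub_four⟩

end
end
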